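/- Let ρ₁ > 0, θ₁, θ₂ ∈ ℝ with α = θ₁ − θ₂, and suppose ρ₁² ≥ 1 + cos α. Then the squared distance from the diagonal point P = (ρ₁ e^{iθ₁}, ρ₁ e^{iθ₂}) to Γ is dist(P, Γ)² = ρ₁² − cos α. -/

import Mathlib

/-!
Write a point of Γ as `gpt ρ θ` and put `s = ρ² + ρ⁻² ≥ 2`, `α = θ₁ - θ₂`. The squared distance
from the diagonal point is `2ρ₁² + s/2 - √2 Re(u e^{-iθ})` with
`u = ρ₁ (ρ e^{iθ₁} + ρ⁻¹ e^{iθ₂})`, so minimising over `θ` replaces the real part by `|u|`, and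
`|u|² = ρ₁² (s + 2 cos α)`. By AM-GM, `√2 |u| ≤ ρ₁² + (s/2 + cos α)`, hence the squared distance
is at least `ρ₁² - cos α`, with equality when `s/2 + cos α = ρ₁²`. Such a `ρ > 0` exists exactly
when `2(ρ₁² - cos α) ≥ 2`, i.e. `ρ₁² ≥ 1 + cos α`.
-/

noncomputable section

open Complex Metric
open scoped Real

/-- ℂ² with the Euclidean (ℝ⁴) distance. -/
abbrev C2 : Type := EuclideanSpace ℂ (Fin 2)

/-- The point (z, w) ∈ ℂ². -/
def pt (z w : ℂ) : C2 := (WithLp.equiv 2 (Fin 2 → ℂ)).symm ![z, w]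

/-- The point of Γ with parameters (ρ, θ). -/
def gpt (ρ θ : ℝ) : C2 :=
  pt (((Real.sqrt 2 / 2 * ρ : ℝ) : ℂ) * Complex.exp ((θ : ℂ) * Complex.I))
     (((Real.sqrt 2 / 2 * ρ⁻¹ : ℝ) : ℂ) * Complex.exp ((θ : ℂ) * Complex.I))

/-- The special Lagrangian surface Γ ⊂ ℂ². -/
def Gam : Set C2 := {p | ∃ ρ θ : ℝ, 0 < ρ ∧ p = gpt ρ θ}

/-- The point (ρ₁ e^{iθ₁}, ρ₂ e^{iθ₂}) ∈ ℂ². -/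
def ppt (ρ₁ θ₁ ρ₂ θ₂ : ℝ) : C2 :=
  pt ((ρ₁ : ℂ) * Complex.exp ((θ₁ : ℂ) * Complex.I))
     ((ρ₂ : ℂ) * Complex.exp ((θ₂ : ℂ) * Complex.I))

lemma dist_pt_sq (z w z' w' : ℂ) :
    dist (pt z w) (pt z' w') ^ 2 = ‖z - z'‖ ^ 2 + ‖w - w'‖ ^ 2 := by
  rw [EuclideanSpace.dist_eq, Real.sq_sqrt (by positivity)]
  simp [pt, Fin.sum_univ_two, Complex.dist_eq]

lemma norm_mul_exp_sub_mul_exp_sq (r s a b : ℝ) :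
    ‖(r : ℂ) * exp (a * I) - s * exp (b * I)‖ ^ 2 = r ^ 2 + s ^ 2 - 2 * r * s * Real.cos (a - b) := by
  rw [Complex.sq_norm, Complex.normSq_apply, Real.cos_sub]
  simp only [exp_mul_I, sub_re, sub_im, mul_re, mul_im, add_re, add_im, ofReal_re, ofReal_im,
    cos_ofReal_re, cos_ofReal_im, sin_ofReal_re, sin_ofReal_im, I_re, I_im]
  linear_combination r ^ 2 * Real.sin_sq_add_cos_sq a + s ^ 2 * Real.sin_sq_add_cos_sq b

lemma norm_mul_exp_add_mul_exp_sq (r s a b : ℝ) :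
    ‖(r : ℂ) * exp (a * I) + s * exp (b * I)‖ ^ 2 = r ^ 2 + s ^ 2 + 2 * r * s * Real.cos (a - b) := by
  have h := norm_mul_exp_sub_mul_exp_sq r (-s) a b
  rw [ofReal_neg, neg_mul, sub_neg_eq_add] at h
  linear_combination h

lemma sq_dist_ppt_gpt (ρ₁ θ₁ ρ₂ θ₂ ρ θ : ℝ) :
    dist (ppt ρ₁ θ₁ ρ₂ θ₂) (gpt ρ θ) ^ 2 = ρ₁ ^ 2 + ρ₂ ^ 2 + (ρ ^ 2 + ρ⁻¹ ^ 2) / 2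
      - √2 * (ρ₁ * ρ * Real.cos (θ₁ - θ) + ρ₂ * ρ⁻¹ * Real.cos (θ₂ - θ)) := by
  rw [ppt, gpt, dist_pt_sq, norm_mul_exp_sub_mul_exp_sq, norm_mul_exp_sub_mul_exp_sq]
  have h2 : √2 ^ 2 = 2 := Real.sq_sqrt (by norm_num)
  linear_combination ((ρ ^ 2 + ρ⁻¹ ^ 2) / 4) * h2

lemma mul_cos_sub_add_mul_cos_sub (a b θ₁ θ₂ θ : ℝ) :
    a * Real.cos (θ₁ - θ) + b * Real.cos (θ₂ - θ) =
      (((a : ℂ) * exp (θ₁ * I) + b * exp (θ₂ * I)) * exp (-(θ * I))).re := by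
  rw [add_mul, mul_assoc, mul_assoc, ← Complex.exp_add, ← Complex.exp_add, ← sub_eq_add_neg,
    ← sub_eq_add_neg, ← sub_mul, ← sub_mul, ← ofReal_sub, ← ofReal_sub]
  simp only [add_re, re_ofReal_mul, exp_ofReal_mul_I_re]

lemma re_mul_exp_neg_le_norm (u : ℂ) (θ : ℝ) : (u * exp (-(θ * I))).re ≤ ‖u‖ := by
  refine (re_le_norm _).trans_eq ?_
  rw [norm_mul, ← neg_mul, ← ofReal_neg, norm_exp_ofReal_mul_I, mul_one]

lemma re_mul_exp_neg_arg (u : ℂ) : (u * exp (-(u.arg * I))).re = ‖u‖ := by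
  nth_rw 1 [← norm_mul_exp_arg_mul_I u]
  rw [mul_assoc, ← Complex.exp_add, add_neg_cancel, Complex.exp_zero, mul_one, ofReal_re]

lemma exists_sq_add_inv_sq_eq {t : ℝ} (ht : 2 ≤ t) : ∃ ρ > 0, ρ ^ 2 + ρ⁻¹ ^ 2 = t := by
  set u := (t + √(t ^ 2 - 4)) / 2
  have hd : √(t ^ 2 - 4) ^ 2 = t ^ 2 - 4 := Real.sq_sqrt (by nlinarith)
  have hu : 0 < u := by positivity
  refine ⟨√u, Real.sqrt_pos.2 hu, ?_⟩
  rw [inv_pow, Real.sq_sqrt hu.le]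
  field_simp
  linear_combination (1 / 4) * hd

lemma two_le_sq_add_inv_sq {ρ : ℝ} (hρ : ρ ≠ 0) : 2 ≤ ρ ^ 2 + ρ⁻¹ ^ 2 := by
  have : ρ * ρ⁻¹ = 1 := mul_inv_cancel₀ hρ
  nlinarith [sq_nonneg (ρ - ρ⁻¹)]

section Diagonal

variable (ρ₁ θ₁ θ₂ : ℝ)

def diagonalPhasor (ρ : ℝ) : ℂ := (ρ₁ * ρ : ℝ) * exp (θ₁ * I) + (ρ₁ * ρ⁻¹ : ℝ) * exp (θ₂ * I)

lemma sq_dist_ppt_gpt_eq_re (ρ θ : ℝ) :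
    dist (ppt ρ₁ θ₁ ρ₁ θ₂) (gpt ρ θ) ^ 2 =
      2 * ρ₁ ^ 2 + (ρ ^ 2 + ρ⁻¹ ^ 2) / 2 - √2 * (diagonalPhasor ρ₁ θ₁ θ₂ ρ * exp (-(θ * I))).re := by
  rw [sq_dist_ppt_gpt, diagonalPhasor, ← mul_cos_sub_add_mul_cos_sub]
  ring

lemma sq_norm_diagonalPhasor {ρ : ℝ} (hρ : ρ ≠ 0) :
    ‖diagonalPhasor ρ₁ θ₁ θ₂ ρ‖ ^ 2 = ρ₁ ^ 2 * (ρ ^ 2 + ρ⁻¹ ^ 2 + 2 * Real.cos (θ₁ - θ₂)) := by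
  have : ρ * ρ⁻¹ = 1 := mul_inv_cancel₀ hρ
  rw [diagonalPhasor, norm_mul_exp_add_mul_exp_sq]
  linear_combination 2 * ρ₁ ^ 2 * Real.cos (θ₁ - θ₂) * this

lemma sub_cos_le_sq_dist_ppt_gpt {ρ : ℝ} (hρ : ρ ≠ 0) (θ : ℝ) :
    ρ₁ ^ 2 - Real.cos (θ₁ - θ₂) ≤ dist (ppt ρ₁ θ₁ ρ₁ θ₂) (gpt ρ θ) ^ 2 := by
  set s := ρ ^ 2 + ρ⁻¹ ^ 2
  set c := Real.cos (θ₁ - θ₂)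
  have hN := sq_norm_diagonalPhasor ρ₁ θ₁ θ₂ hρ
  have h2 : √2 ^ 2 = 2 := Real.sq_sqrt (by norm_num)
  have hs := two_le_sq_add_inv_sq hρ
  have hc := Real.neg_one_le_cos (θ₁ - θ₂)
  have hle : √2 * ‖diagonalPhasor ρ₁ θ₁ θ₂ ρ‖ ≤ ρ₁ ^ 2 + s / 2 + c := by
    refine le_of_pow_le_pow_left₀ two_ne_zero (by nlinarith [sq_nonneg ρ₁]) ?_
    nlinarith [sq_nonneg (ρ₁ ^ 2 - s / 2 - c)]
  have hre := mul_le_mul_of_nonneg_left (re_mul_exp_neg_le_norm (diagonalPhasor ρ₁ θ₁ θ₂ ρ) θ)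
    (Real.sqrt_nonneg 2)
  rw [sq_dist_ppt_gpt_eq_re]
  linarith

lemma exists_sq_dist_ppt_gpt_eq (hfar : 1 + Real.cos (θ₁ - θ₂) ≤ ρ₁ ^ 2) :
    ∃ ρ > 0, ∃ θ, dist (ppt ρ₁ θ₁ ρ₁ θ₂) (gpt ρ θ) ^ 2 = ρ₁ ^ 2 - Real.cos (θ₁ - θ₂) := by
  obtain ⟨ρ, hρ, hs⟩ := exists_sq_add_inv_sq_eq (t := 2 * (ρ₁ ^ 2 - Real.cos (θ₁ - θ₂)))
    (by linarith)
  refine ⟨ρ, hρ, (diagonalPhasor ρ₁ θ₁ θ₂ ρ).arg, ?_⟩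
  have h2 : √2 ^ 2 = 2 := Real.sq_sqrt (by norm_num)
  have hN : √2 * ‖diagonalPhasor ρ₁ θ₁ θ₂ ρ‖ = 2 * ρ₁ ^ 2 := by
    refine (sq_eq_sq₀ (by positivity) (by positivity)).1 ?_
    rw [mul_pow, sq_norm_diagonalPhasor ρ₁ θ₁ θ₂ hρ.ne', hs, h2]
    ring
  rw [sq_dist_ppt_gpt_eq_re, re_mul_exp_neg_arg, hN, hs]
  ring

end Diagonal

lemma Metric.infDist_eq_dist_of_mem_of_forall_dist_le {α : Type*} [PseudoMetricSpace α]
    {x y : α} {s : Set α} (hy : y ∈ s) (h : ∀ z ∈ s, dist x y ≤ dist x z) :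
    infDist x s = dist x y :=
  le_antisymm (infDist_le_dist_of_mem hy) ((le_infDist ⟨y, hy⟩).2 h)

theorem sq_dist_diagonal_far (ρ₁ θ₁ θ₂ : ℝ)
    (hfar : 1 + Real.cos (θ₁ - θ₂) ≤ ρ₁ ^ 2) :
    (Metric.infDist (ppt ρ₁ θ₁ ρ₁ θ₂) Gam) ^ 2 = ρ₁ ^ 2 - Real.cos (θ₁ - θ₂) := by
  obtain ⟨ρ₀, hρ₀, θ₀, h₀⟩ := exists_sq_dist_ppt_gpt_eq ρ₁ θ₁ θ₂ hfar
  have hmin : ∀ q ∈ Gam, dist (ppt ρ₁ θ₁ ρ₁ θ₂) (gpt ρ₀ θ₀) ≤ dist (ppt ρ₁ θ₁ ρ₁ θ₂) q := by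
    rintro _ ⟨ρ, θ, hρ, rfl⟩
    refine le_of_pow_le_pow_left₀ two_ne_zero dist_nonneg ?_
    rw [h₀]
    exact sub_cos_le_sq_dist_ppt_gpt ρ₁ θ₁ θ₂ hρ.ne' θ
  have hmem : gpt ρ₀ θ₀ ∈ Gam := ⟨ρ₀, θ₀, hρ₀, rfl⟩
  rw [Metric.infDist_eq_dist_of_mem_of_forall_dist_le hmem hmin, h₀]

end
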